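/- Let d ≥ 1, let D(d) be the one-point compactification of D'(d) := {(t_0,…,t_{d−1}) ∈ ℝ^d : t_0 ≤ … ≤ t_{d−1}}, and for 0 ≤ i ≤ d−2 let F_i(D(d)) := F_i(D'(d)) ∪ {∞} where F_i(D'(d)) := {t ∈ D'(d) : t_i = t_{i+1}}. Call a continuous map f : D(d) → D(d) facial if f(F_i(D(d))) ⊆ F_i(D(d)) for all i, and note that every facial map carries the subspace B̄_∅ := ⋂_{0 ≤ i ≤ d−2} F_i(D(d)) = {(t,…,t) : t ∈ ℝ} ∪ {∞} (which is homeomorphic to the circle S¹) into itself. Then two facial maps f, g : D(d) → D(d) are homotopic through facial maps (i.e. there is a continuous H : [0,1] × D(d) → D(d) with H(0,·) = f, H(1,·) = g, and H(s,·) facial for every s ∈ [0,1]) if and only if the restrictions f|_{B̄_∅} and g|_{B̄_∅}, regarded as self-maps of B̄_∅, are homotopic (equivalently, the induced self-maps of S¹ have the same degree). -/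

import Mathlib

set_option maxHeartbeats 1000000

open Filter Topology Set Complex

open scoped OnePoint

/-- `D'(d) = {t ∈ ℝ^d : t₀ ≤ … ≤ t_{d−1}}`. -/
def DSet (d : ℕ) : Type := {t : Fin d → ℝ // Monotone t}

instance (d : ℕ) : TopologicalSpace (DSet d) := instTopologicalSpaceSubtype

/-- The face `F_i(D(d)) = F_i(D'(d)) ∪ {∞}` of the one-point compactification `D(d)`,
recorded for a pair of consecutive indices `i`, `j = i+1`. -/
def faceSet (d : ℕ) (i j : Fin d) : Set (OnePoint (DSet d)) :=
  {x | x = ∞ ∨ ∃ q : DSet d, q.1 i = q.1 j ∧ x = OnePoint.some q}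

/-- A self-map of `D(d)` is facial if it carries each face `F_i(D(d))` into itself. -/
def FacialMap (d : ℕ) (f : OnePoint (DSet d) → OnePoint (DSet d)) : Prop :=
  ∀ i j : Fin d, (i : ℕ) + 1 = (j : ℕ) → ∀ x ∈ faceSet d i j, f x ∈ faceSet d i j

/-- `B̄_∅ = ⋂ᵢ F_i(D(d)) = {(t,…,t) : t ∈ ℝ} ∪ {∞}`, a circle inside `D(d)`. -/
def diagCircle (d : ℕ) : Set (OnePoint (DSet d)) :=
  {x | x = ∞ ∨ ∃ q : DSet d, (∀ i j : Fin d, q.1 i = q.1 j) ∧ x = OnePoint.some q}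

instance (d : ℕ) : T2Space (DSet d) :=
  inferInstanceAs (T2Space {t : Fin d → ℝ // Monotone t})

noncomputable def Complex.abs : AbsoluteValue ℂ ℝ where
  toFun := fun z => ‖z‖
  map_mul' := norm_mul
  nonneg' := norm_nonneg
  eq_zero' := fun _ => norm_eq_zero
  add_le' := norm_add_le

lemma Complex.continuous_abs : Continuous Complex.abs := continuous_norm

lemma Complex.abs_ofReal (r : ℝ) : Complex.abs (r : ℂ) = |r| := Complex.norm_real r

lemma Complex.sq_abs (z : ℂ) : Complex.abs z ^ 2 = Complex.normSq z := Complex.sq_norm z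

lemma Complex.abs_apply (z : ℂ) : Complex.abs z = Real.sqrt (Complex.normSq z) := by
  show ‖z‖ = _
  rw [← Complex.sq_norm, Real.sqrt_sq (norm_nonneg z)]

namespace Miller18

variable {m : ℕ}

/-- ambient Euclidean model space -/
abbrev EE (m : ℕ) := ℂ × (Fin m → ℝ)

def Mset (m : ℕ) : Set (EE m) := {p | (∀ i, 0 ≤ p.2 i) ∧ Complex.abs p.1 + ∑ i, p.2 i = 1}

def strat (S : Finset (Fin m)) : Set (EE m) := {p | p ∈ Mset m ∧ ∀ i ∈ S, p.2 i = 0}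

noncomputable def Zs (p : EE m) : Finset (Fin m) :=
  Finset.univ.filter (fun i => p.2 i = 0)

def Tk (m k : ℕ) : Set (EE m) := {p | p ∈ Mset m ∧ k ≤ (Zs p).card}

def IccS : Set ℝ := Set.Icc 0 1
def endS : Set ℝ := {0, 1}

def Ak (m k : ℕ) : Set (EE m × ℝ) := (Tk m k) ×ˢ IccS ∪ (Mset m) ×ˢ endS

def bdry (S : Finset (Fin m)) : Set (EE m) := {p | p ∈ strat S ∧ ∃ i ∉ S, p.2 i = 0}

def DOM (S : Finset (Fin m)) : Set (EE m × ℝ) := (strat S) ×ˢ endS ∪ (bdry S) ×ˢ IccS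

lemma mem_Zs {p : EE m} {i : Fin m} : i ∈ Zs p ↔ p.2 i = 0 := by
  simp [Zs]

lemma cont_y (i : Fin m) : Continuous (fun p : EE m => p.2 i) :=
  (continuous_apply i).comp continuous_snd

lemma cont_nn : Continuous (fun p : EE m => Complex.abs p.1 + ∑ i, p.2 i) := by
  exact (Complex.continuous_abs.comp continuous_fst).add
    (continuous_finset_sum _ (fun i _ => cont_y i))

lemma isClosed_Mset : IsClosed (Mset m) := by
  have h1 : IsClosed {p : EE m | ∀ i, 0 ≤ p.2 i} := by
    rw [Set.setOf_forall]
    exact isClosed_iInter (fun i => isClosed_le continuous_const (cont_y i))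
  exact IsClosed.inter h1 (isClosed_eq cont_nn continuous_const)

lemma isClosed_strat (S : Finset (Fin m)) : IsClosed (strat S) := by
  have h1 : IsClosed {p : EE m | ∀ i ∈ S, p.2 i = 0} := by
    rw [Set.setOf_forall]
    refine isClosed_iInter (fun i => ?_)
    rw [Set.setOf_forall]
    exact isClosed_iInter (fun _ => isClosed_eq (cont_y i) continuous_const)
  exact IsClosed.inter isClosed_Mset h1

lemma strat_subset_Mset (S : Finset (Fin m)) : strat S ⊆ Mset m := fun p hp => hp.1

lemma Tk_eq_union (k : ℕ) :
    Tk m k = ⋃ S ∈ Finset.univ.filter (fun S : Finset (Fin m) => S.card = k), strat S := by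
  ext p
  simp only [Set.mem_iUnion, Finset.mem_filter, Finset.mem_univ, true_and, Tk, Set.mem_setOf_eq]
  constructor
  · rintro ⟨hM, hcard⟩
    obtain ⟨S, hSsub, hScard⟩ := Finset.exists_subset_card_eq hcard
    exact ⟨S, hScard, hM, fun i hi => mem_Zs.mp (hSsub hi)⟩
  · rintro ⟨S, hScard, hM, hz⟩
    refine ⟨hM, ?_⟩
    rw [← hScard]
    exact Finset.card_le_card (fun i hi => mem_Zs.mpr (hz i hi))

lemma isClosed_Tk (k : ℕ) : IsClosed (Tk m k) := by
  rw [Tk_eq_union]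
  exact Set.Finite.isClosed_biUnion (Finset.finite_toSet _) (fun S _ => isClosed_strat S)

lemma isClosed_IccS : IsClosed IccS := isClosed_Icc

lemma isClosed_endS : IsClosed endS := by
  exact (Set.toFinite ({0,1} : Set ℝ)).isClosed

lemma isClosed_Ak (k : ℕ) : IsClosed (Ak m k) :=
  ((isClosed_Tk k).prod isClosed_IccS).union (isClosed_Mset.prod isClosed_endS)

lemma isClosed_bdry (S : Finset (Fin m)) : IsClosed (bdry S) := by
  have : bdry S = ⋃ i ∈ (Sᶜ : Finset (Fin m)), (strat S ∩ {p | p.2 i = 0}) := by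
    ext p
    simp only [bdry, Set.mem_setOf_eq, Set.mem_iUnion, Set.mem_inter_iff, Finset.mem_compl]
    tauto
  rw [this]
  exact Set.Finite.isClosed_biUnion (Finset.finite_toSet _) (fun i _ =>
    (isClosed_strat S).inter (isClosed_eq (cont_y i) continuous_const))

lemma isClosed_DOM (S : Finset (Fin m)) : IsClosed (DOM S) :=
  ((isClosed_strat S).prod isClosed_endS).union ((isClosed_bdry S).prod isClosed_IccS)

/-- gluing continuity over two closed pieces -/
lemma contOn_union_closed {α β : Type*} [TopologicalSpace α] [TopologicalSpace β]
    {f : α → β} {s t : Set α} (hs : IsClosed s) (ht : IsClosed t)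
    (hfs : ContinuousOn f s) (hft : ContinuousOn f t) : ContinuousOn f (s ∪ t) := by
  intro x hx
  have hcwa : ∀ (u : Set α), IsClosed u → ContinuousOn f u → ContinuousWithinAt f u x := by
    intro u hu hfu
    by_cases hxu : x ∈ u
    · exact hfu x hxu
    · have : x ∉ closure u := by rwa [hu.closure_eq]
      exact continuousWithinAt_of_notMem_closure this
  exact (hcwa s hs hfs).union (hcwa t ht hft)

lemma contOn_biUnion_closed {α β : Type*} [TopologicalSpace α] [TopologicalSpace β]
    {ι : Type*} (t : Finset ι) {F : ι → Set α} {f : α → β}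
    (hcl : ∀ i ∈ t, IsClosed (F i)) (hf : ∀ i ∈ t, ContinuousOn f (F i)) :
    ContinuousOn f (⋃ i ∈ t, F i) := by
  classical
  induction t using Finset.induction_on with
  | empty => simp
  | insert a s hnotmem ih =>
    rw [Finset.set_biUnion_insert]
    exact contOn_union_closed (hcl a (Finset.mem_insert_self a s))
      (Set.Finite.isClosed_biUnion (Finset.finite_toSet _) (fun i hi => hcl i (Finset.mem_insert_of_mem hi)))
      (hf a (Finset.mem_insert_self a s))
      (ih (fun i hi => hcl i (Finset.mem_insert_of_mem hi))
          (fun i hi => hf i (Finset.mem_insert_of_mem hi)))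

/-- continuity of finite sup' -/
lemma cont_sup' {α : Type*} [TopologicalSpace α] {ι : Type*} (s : Finset ι) (hs : s.Nonempty)
    (f : ι → α → ℝ) (hf : ∀ i ∈ s, Continuous (f i)) :
    Continuous (fun a => s.sup' hs (fun i => f i a)) := by
  revert hf
  induction hs using Finset.Nonempty.cons_induction with
  | singleton a => intro hf; simpa using hf a (by simp)
  | cons a s ha hs ih =>
    intro hf
    have heq : (fun x => (Finset.cons a s ha).sup' (Finset.cons_nonempty ha) (fun i => f i x))
        = fun x => max (f a x) (s.sup' hs (fun i => f i x)) := by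
      funext x
      rw [Finset.sup'_cons hs]
    rw [heq]
    exact (hf a (by simp)).max (ih (fun i hi => hf i (Finset.mem_cons_of_mem hi)))


/-! ### Mset helper lemmas -/

lemma Mset_y_nonneg {p : EE m} (hp : p ∈ Mset m) (i : Fin m) : 0 ≤ p.2 i := hp.1 i

lemma Mset_y_le_one {p : EE m} (hp : p ∈ Mset m) (i : Fin m) : p.2 i ≤ 1 := by
  have h1 : p.2 i ≤ ∑ j, p.2 j :=
    Finset.single_le_sum (fun j _ => hp.1 j) (Finset.mem_univ i)
  have h2 : (0:ℝ) ≤ Complex.abs p.1 := Complex.abs.nonneg _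
  linarith [hp.2]

lemma Mset_abs_le_one {p : EE m} (hp : p ∈ Mset m) : Complex.abs p.1 ≤ 1 := by
  have h1 : (0:ℝ) ≤ ∑ j, p.2 j := Finset.sum_nonneg (fun j _ => hp.1 j)
  linarith [hp.2]

/-! ### The key extension lemma -/

lemma ext_step (S : Finset (Fin m)) (hR : (Sᶜ : Finset (Fin m)).Nonempty)
    (φ : EE m × ℝ → EE m)
    (hφc : ContinuousOn φ (DOM S))
    (hφm : ∀ p ∈ DOM S, φ p ∈ strat S) :
    ∃ ψ : EE m × ℝ → EE m,
      ContinuousOn ψ ((strat S) ×ˢ IccS) ∧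
      (∀ p ∈ DOM S, ψ p = φ p) ∧
      (∀ p ∈ (strat S) ×ˢ IccS, ψ p ∈ strat S) := by
  classical
  set R : Finset (Fin m) := Sᶜ with hRdef
  set r : ℝ := (R.card : ℝ) with hrdef
  have hr1 : (1:ℝ) ≤ r := by
    rw [hrdef]
    have : 1 ≤ R.card := hR.card_pos
    exact_mod_cast this
  have hr0 : (0:ℝ) < r := by linarith
  set β : Fin m → ℝ := fun i => if i ∈ R then 1/r else 0 with hβdef
  have hβnn : ∀ i, 0 ≤ β i := by
    intro i; simp only [hβdef]; split
    · positivity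
    · exact le_refl 0
  have hβle : ∀ i, β i ≤ 1 := by
    intro i; simp only [hβdef]; split
    · rw [div_le_one hr0]; linarith
    · norm_num
  have hβS : ∀ i ∈ S, β i = 0 := by
    intro i hi
    have hiR : i ∉ R := by simp [hRdef, hi]
    simp only [hβdef, if_neg hiR]
  have hβsum : ∑ i, β i = 1 := by
    simp only [hβdef]
    rw [Finset.sum_ite_mem, Finset.univ_inter, Finset.sum_const, nsmul_eq_mul]
    field_simp
    exact hrdef.symm
  set mf : EE m → ℝ := fun q => R.sup' hR (fun i => max 0 (1 - r * q.2 i)) with hmfdef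
  have hmfcont : Continuous mf :=
    cont_sup' R hR _ (fun i _ => continuous_const.max
      (continuous_const.sub (continuous_const.mul (cont_y i))))
  set Mf : EE m × ℝ → ℝ := fun p => max (mf p.1) |2 * p.2 - 1| with hMfdef
  have hMfcont : Continuous Mf :=
    (hmfcont.comp continuous_fst).max
      ((continuous_const.mul continuous_snd).sub continuous_const).abs
  have hmf_nn : ∀ q, 0 ≤ mf q := by
    intro q
    obtain ⟨i0, hi0⟩ := hR
    exact le_trans (le_max_left 0 (1 - r * q.2 i0))
      (Finset.le_sup' (fun i => max 0 (1 - r * q.2 i)) hi0)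
  have hMf_nn : ∀ p, 0 ≤ Mf p := fun p => le_trans (hmf_nn p.1) (le_max_left _ _)
  have hmf_le_one : ∀ q ∈ strat S, mf q ≤ 1 := by
    intro q hq
    apply Finset.sup'_le
    intro i _
    have h1 : 0 ≤ r * q.2 i := mul_nonneg hr0.le (hq.1.1 i)
    exact max_le (by norm_num) (by linarith)
  have hMf_le_one : ∀ p ∈ (strat S) ×ˢ IccS, Mf p ≤ 1 := by
    rintro ⟨q, s⟩ ⟨hq, hs⟩
    refine max_le (hmf_le_one q hq) ?_
    rw [abs_le]
    obtain ⟨hs0, hs1⟩ := hs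
    constructor <;> simp at hs0 hs1 ⊢ <;> nlinarith
  -- the radial projection
  set Pr : EE m × ℝ → EE m × ℝ := fun p =>
    ((p.1.1 / ((Mf p : ℝ) : ℂ), fun i => β i + (p.1.2 i - β i) / Mf p),
      1/2 + (p.2 - 1/2) / Mf p) with hPrdef
  -- membership of the projection in the boundary domain
  have hPiDom : ∀ p ∈ (strat S) ×ˢ IccS, Mf p ≠ 0 → Pr p ∈ DOM S ∧ (Pr p).1 ∈ strat S := by
    rintro ⟨q, s⟩ ⟨hq, hs⟩ hM
    set M : ℝ := Mf (q, s) with hMdef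
    have hM0 : 0 < M := lt_of_le_of_ne (hMf_nn (q,s)) (Ne.symm hM)
    have hMle1 : M ≤ 1 := hMf_le_one (q,s) ⟨hq, hs⟩
    have hmfle : mf q ≤ M := le_max_left _ _
    have habsle : |2 * s - 1| ≤ M := le_max_right _ _
    -- coordinates of the projected point
    have hcoordS : ∀ i ∈ S, β i + (q.2 i - β i) / M = 0 := by
      intro i hi
      rw [hβS i hi, hq.2 i hi]
      simp
    have hcoord_nn : ∀ i, 0 ≤ β i + (q.2 i - β i) / M := by
      intro i
      by_cases hiR : i ∈ R
      · have hβi : β i = 1/r := by simp only [hβdef, if_pos hiR]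
        have hterm : 1 - r * q.2 i ≤ M :=
          le_trans (le_trans (le_max_right 0 (1 - r * q.2 i))
            (Finset.le_sup' (fun j => max 0 (1 - r * q.2 j)) hiR)) hmfle
        rw [hβi, div_add_div _ _ (ne_of_gt hr0) (ne_of_gt hM0)]
        apply div_nonneg _ (mul_nonneg hr0.le hM0.le)
        have hrr : r * (1/r) = 1 := mul_one_div_cancel hr0.ne'
        nlinarith [hterm]
      · have hiS : i ∈ S := by
          simp only [hRdef, Finset.mem_compl, not_not] at hiR
          exact hiR
        rw [hcoordS i hiS]
    have hsumPr : ∑ i, (β i + (q.2 i - β i) / M) = 1 + (∑ i, q.2 i - 1) / M := by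
      rw [Finset.sum_add_distrib, hβsum, ← Finset.sum_div, Finset.sum_sub_distrib, hβsum]
    have habsPr : Complex.abs (q.1 / ((M : ℝ) : ℂ)) = Complex.abs q.1 / M := by
      rw [map_div₀, Complex.abs_ofReal, abs_of_pos hM0]
    have hconstr : Complex.abs (q.1 / ((M : ℝ) : ℂ)) + ∑ i, (β i + (q.2 i - β i) / M) = 1 := by
      rw [habsPr, hsumPr]
      have hq2 := hq.1.2
      have : ∑ i, q.2 i - 1 = -Complex.abs q.1 := by linarith
      rw [this]
      field_simp
      ring
    have hPrstrat : (Pr (q, s)).1 ∈ strat S := by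
      refine ⟨⟨fun i => hcoord_nn i, hconstr⟩, fun i hi => hcoordS i hi⟩
    refine ⟨?_, hPrstrat⟩
    -- now the boundary membership
    rcases le_total (mf q) |2 * s - 1| with hca | hcb
    · -- M = |2s-1|, the time coordinate hits an endpoint
      have hMeq : M = |2 * s - 1| := max_eq_right hca
      have hsne : 2 * s - 1 ≠ 0 := by
        intro h0
        rw [hMeq, h0] at hM0
        simp at hM0
      left
      refine ⟨hPrstrat, ?_⟩
      show (1:ℝ)/2 + (s - 1/2) / M ∈ endS
      rcases abs_cases (2 * s - 1) with ⟨habs, _⟩ | ⟨habs, _⟩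
      · right
        show (1:ℝ)/2 + (s - 1/2) / M = 1
        rw [hMeq, habs]
        have hdd : (s - 1/2) / (2*s - 1) = 1/2 := by
          rw [div_eq_iff hsne]; ring
        rw [hdd]; norm_num
      · left
        show (1:ℝ)/2 + (s - 1/2) / M = 0
        rw [hMeq, habs]
        have hne' : -(2 * s - 1) ≠ 0 := neg_ne_zero.mpr hsne
        have hdd : (s - 1/2) / (-(2*s - 1)) = -(1/2) := by
          rw [div_eq_iff hne']; ring
        rw [hdd]; norm_num
    · -- M = mf q, some coordinate hits zero
      have hMeq : M = mf q := max_eq_left hcb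
      obtain ⟨i0, hi0R, hi0⟩ := Finset.exists_mem_eq_sup' hR (fun i => max 0 (1 - r * q.2 i))
      have hterm : max 0 (1 - r * q.2 i0) = 1 - r * q.2 i0 := by
        rcases max_cases 0 (1 - r * q.2 i0) with ⟨h1, _⟩ | ⟨h1, _⟩
        · exfalso
          have hz : M = 0 := by rw [hMeq]; exact hi0.trans h1
          exact hM0.ne' hz
        · exact h1
      have hMval : M = 1 - r * q.2 i0 := by
        rw [hMeq]; exact hi0.trans hterm
      right
      constructor
      · -- (Pr p).1 ∈ bdry S
        refine ⟨hPrstrat, ⟨i0, ?_, ?_⟩⟩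
        · intro hi0S
          have : i0 ∉ R := by simp [hRdef, hi0S]
          exact this hi0R
        · -- coordinate i0 vanishes
          show β i0 + (q.2 i0 - β i0) / M = 0
          have hβi0 : β i0 = 1/r := by simp only [hβdef, if_pos hi0R]
          have hMne : 1 - r * q.2 i0 ≠ 0 := by rw [← hMval]; exact hM0.ne'
          rw [hβi0, hMval, div_add_div _ _ hr0.ne' hMne, div_eq_zero_iff]
          left
          have hrr : r * (1/r) = 1 := mul_one_div_cancel hr0.ne'
          linear_combination -hrr
      · -- time coordinate within Icc
        show (1:ℝ)/2 + (s - 1/2) / M ∈ IccS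
        have h1 : |s - 1/2| ≤ M / 2 := by
          rw [abs_le] at habsle ⊢
          constructor <;> [linarith [habsle.1]; linarith [habsle.2]]
        rw [abs_le] at h1
        have h2 : (s - 1/2)/M ≤ 1/2 := by
          rw [div_le_iff₀ hM0]; nlinarith [h1.2]
        have h3 : -(1/2:ℝ) ≤ (s - 1/2)/M := by
          rw [le_div_iff₀ hM0]; nlinarith [h1.1]
        exact ⟨by linarith, by linarith⟩
  -- define ψ
  set ψ : EE m × ℝ → EE m := fun p =>
    (((Mf p : ℝ) : ℂ) * (φ (Pr p)).1,
      fun i => Mf p * (φ (Pr p)).2 i + (1 - Mf p) * β i) with hψdef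
  -- value at the center
  have hψzero : ∀ p, Mf p = 0 → ψ p = (((0:ℂ), β) : EE m) := by
    intro p hMp
    show ((((Mf p:ℝ):ℂ) * (φ (Pr p)).1),
      (fun i => Mf p * (φ (Pr p)).2 i + (1 - Mf p) * β i)) = (((0:ℂ), β) : EE m)
    rw [Prod.ext_iff]
    constructor
    · show ((Mf p:ℝ):ℂ) * (φ (Pr p)).1 = (0:ℂ)
      rw [hMp]; simp
    · show (fun i => Mf p * (φ (Pr p)).2 i + (1 - Mf p) * β i) = β
      funext i; rw [hMp]; ring
  -- distance bound towards the center
  have hbound : ∀ p ∈ (strat S) ×ˢ IccS, dist (ψ p) ((((0:ℂ), β)) : EE m) ≤ 2 * Mf p := by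
    intro p hp
    by_cases hMp : Mf p = 0
    · rw [hψzero p hMp, hMp]
      simp
    · have hPiD := hPiDom p hp hMp
      have hu := hφm _ hPiD.1
      have hM0 : 0 < Mf p := lt_of_le_of_ne (hMf_nn _) (Ne.symm hMp)
      rw [Prod.dist_eq]
      apply max_le
      · rw [Complex.dist_eq]
        show Complex.abs (((Mf p:ℝ):ℂ) * (φ (Pr p)).1 - 0) ≤ 2 * Mf p
        rw [sub_zero, map_mul, Complex.abs_ofReal, abs_of_pos hM0]
        have h1 : Complex.abs (φ (Pr p)).1 ≤ 1 := Mset_abs_le_one hu.1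
        nlinarith
      · rw [dist_pi_le_iff (by positivity)]
        intro i
        rw [Real.dist_eq]
        show |Mf p * (φ (Pr p)).2 i + (1 - Mf p) * β i - β i| ≤ 2 * Mf p
        have h1 : 0 ≤ (φ (Pr p)).2 i := hu.1.1 i
        have h2 : (φ (Pr p)).2 i ≤ 1 := Mset_y_le_one hu.1 i
        have h3 := hβnn i; have h4 := hβle i
        rw [abs_le]
        constructor <;> nlinarith
  refine ⟨ψ, ?_, ?_, ?_⟩
  · -- continuity
    intro p hp
    by_cases hM : Mf p = 0
    · unfold ContinuousWithinAt
      rw [hψzero p hM, tendsto_iff_dist_tendsto_zero]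
      refine squeeze_zero' (Filter.Eventually.of_forall fun _ => dist_nonneg)
        (Filter.eventually_of_mem self_mem_nhdsWithin fun p' hp'' => hbound p' hp'') ?_
      have hc : Continuous fun p' : EE m × ℝ => 2 * Mf p' := continuous_const.mul hMfcont
      have h2 := (hc.tendsto p).mono_left (nhdsWithin_le_nhds (s := (strat S) ×ˢ IccS))
      rw [hM] at h2
      simpa using h2
    · have hopen : IsOpen {p' : EE m × ℝ | Mf p' ≠ 0} :=
        IsOpen.preimage hMfcont isOpen_compl_singleton
      rw [← continuousWithinAt_inter (hopen.mem_nhds hM)]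
      have hmaps : Set.MapsTo Pr (((strat S) ×ˢ IccS) ∩ {p' | Mf p' ≠ 0}) (DOM S) :=
        fun p' hp' => (hPiDom p' hp'.1 hp'.2).1
      have hMfA : ContinuousAt Mf p := hMfcont.continuousAt
      have hMC : ContinuousAt (fun p' : EE m × ℝ => ((Mf p' : ℝ) : ℂ)) p :=
        Complex.continuous_ofReal.continuousAt.comp hMfA
      have hPrCA : ContinuousAt Pr p := by
        apply ContinuousAt.prodMk
        · apply ContinuousAt.prodMk
          · exact ContinuousAt.div₀ (continuous_fst.fst.continuousAt) hMC
              (Complex.ofReal_ne_zero.mpr hM)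
          · rw [continuousAt_pi]
            intro i
            exact continuousAt_const.add
              ((((continuous_apply i).comp continuous_fst.snd).continuousAt.sub
                continuousAt_const).div hMfA hM)
        · exact continuousAt_const.add
            ((continuous_snd.continuousAt.sub continuousAt_const).div hMfA hM)
      have hφCWA : ContinuousWithinAt φ (DOM S) (Pr p) := hφc (Pr p) (hPiDom p hp hM).1
      have hcomp : ContinuousWithinAt (fun p' => φ (Pr p'))
          (((strat S) ×ˢ IccS) ∩ {p' | Mf p' ≠ 0}) p :=
        hφCWA.comp hPrCA.continuousWithinAt hmaps
      apply ContinuousWithinAt.prodMk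
      · exact (hMC.continuousWithinAt).mul
          (continuous_fst.continuousAt.comp_continuousWithinAt hcomp)
      · rw [continuousWithinAt_pi]
        intro i
        refine ContinuousWithinAt.add ?_ ?_
        · exact (hMfA.continuousWithinAt).mul
            (((continuous_apply i).comp continuous_snd).continuousAt.comp_continuousWithinAt hcomp)
        · exact ((continuousAt_const.sub hMfA).continuousWithinAt).mul continuousWithinAt_const
  · -- agreement with φ on the boundary domain
    rintro ⟨q, s⟩ hp
    have hM1 : Mf (q, s) = 1 := by
      rcases hp with ⟨hq', hs'⟩ | ⟨hq', hs'⟩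
      · have hs01 : s = 0 ∨ s = 1 := by simpa [endS] using hs'
        have habs : |2 * s - 1| = 1 := by rcases hs01 with rfl | rfl <;> norm_num
        show max (mf q) |2 * s - 1| = 1
        rw [habs]
        exact max_eq_right (hmf_le_one q hq')
      · obtain ⟨hqs, i0, hi0S, hi0⟩ := hq'
        have hi0R : i0 ∈ R := Finset.mem_compl.mpr hi0S
        have h1 : (1:ℝ) ≤ mf q := by
          calc (1:ℝ) = max 0 (1 - r * q.2 i0) := by rw [hi0]; norm_num
          _ ≤ mf q := Finset.le_sup' (fun i => max 0 (1 - r * q.2 i)) hi0R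
        have hmfq : mf q = 1 := le_antisymm (hmf_le_one q hqs) h1
        show max (mf q) |2 * s - 1| = 1
        rw [hmfq]
        apply max_eq_left
        rw [abs_le]
        obtain ⟨ha, hb⟩ := hs'
        constructor <;> nlinarith
    have hPr : Pr (q, s) = (q, s) := by
      show ((q.1 / ((Mf (q,s):ℝ):ℂ), fun i => β i + (q.2 i - β i) / Mf (q,s)),
        1/2 + (s - 1/2) / Mf (q,s)) = (q, s)
      rw [hM1, Prod.ext_iff]
      constructor
      · rw [Prod.ext_iff]
        constructor
        · show q.1 / ((1:ℝ):ℂ) = q.1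
          norm_num
        · show (fun i => β i + (q.2 i - β i) / 1) = q.2
          funext i; ring
      · show 1/2 + (s - 1/2)/1 = s
        ring
    show ((((Mf (q,s):ℝ):ℂ) * (φ (Pr (q,s))).1),
      (fun i => Mf (q,s) * (φ (Pr (q,s))).2 i + (1 - Mf (q,s)) * β i)) = φ (q, s)
    rw [hPr, hM1, Prod.ext_iff]
    constructor
    · show ((1:ℝ):ℂ) * (φ (q,s)).1 = (φ (q,s)).1
      norm_num
    · show (fun i => 1 * (φ (q,s)).2 i + (1-1) * β i) = (φ (q,s)).2
      funext i; ring
  · -- membership in the stratum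
    rintro ⟨q, s⟩ ⟨hq, hs⟩
    by_cases hM : Mf (q, s) = 0
    · rw [hψzero (q, s) hM]
      refine ⟨⟨fun i => hβnn i, ?_⟩, fun i hi => hβS i hi⟩
      show Complex.abs 0 + ∑ i, β i = 1
      rw [map_zero, hβsum, zero_add]
    · have hPiD := hPiDom (q, s) ⟨hq, hs⟩ hM
      have hu := hφm _ hPiD.1
      have hM0 : 0 < Mf (q, s) := lt_of_le_of_ne (hMf_nn _) (Ne.symm hM)
      have hMle1 : Mf (q, s) ≤ 1 := hMf_le_one _ ⟨hq, hs⟩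
      refine ⟨⟨fun i => ?_, ?_⟩, fun i hi => ?_⟩
      · show 0 ≤ Mf (q,s) * (φ (Pr (q,s))).2 i + (1 - Mf (q,s)) * β i
        have h1 := hu.1.1 i
        have h2 := hβnn i
        nlinarith
      · show Complex.abs (((Mf (q,s):ℝ):ℂ) * (φ (Pr (q,s))).1)
          + ∑ i, (Mf (q,s) * (φ (Pr (q,s))).2 i + (1 - Mf (q,s)) * β i) = 1
        rw [map_mul, Complex.abs_ofReal, abs_of_pos hM0, Finset.sum_add_distrib,
          ← Finset.mul_sum, ← Finset.mul_sum, hβsum]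
        have hc := hu.1.2
        linear_combination (Mf (q,s)) * hc
      · show Mf (q,s) * (φ (Pr (q,s))).2 i + (1 - Mf (q,s)) * β i = 0
        rw [hu.2 i hi, hβS i hi]; ring

/-! ### The inductive gluing of homotopies over the strata -/

lemma glue (f' g' : EE m → EE m) (K' : EE m × ℝ → EE m)
    (hf'c : ContinuousOn f' (Mset m)) (hg'c : ContinuousOn g' (Mset m))
    (hf'm : ∀ p ∈ Mset m, f' p ∈ Mset m ∧ ∀ i, p.2 i = 0 → (f' p).2 i = 0)
    (hg'm : ∀ p ∈ Mset m, g' p ∈ Mset m ∧ ∀ i, p.2 i = 0 → (g' p).2 i = 0)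
    (hK'c : ContinuousOn K' ((Tk m m) ×ˢ IccS))
    (hK'm : ∀ p ∈ (Tk m m) ×ˢ IccS, K' p ∈ Mset m ∧ ∀ i, (K' p).2 i = 0)
    (hK0 : ∀ q ∈ Tk m m, K' (q, 0) = f' q)
    (hK1 : ∀ q ∈ Tk m m, K' (q, 1) = g' q) :
    ∃ G : EE m × ℝ → EE m,
      ContinuousOn G ((Mset m) ×ˢ IccS) ∧
      (∀ q ∈ Mset m, G (q, 0) = f' q ∧ G (q, 1) = g' q) ∧
      (∀ p ∈ (Mset m) ×ˢ IccS, G p ∈ Mset m ∧ ∀ i, p.1.2 i = 0 → (G p).2 i = 0) := by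
  classical
  set Claim : ℕ → Prop := fun k =>
    ∃ G : EE m × ℝ → EE m,
      ContinuousOn G (Ak m k) ∧
      (∀ q ∈ Mset m, G (q, 0) = f' q ∧ G (q, 1) = g' q) ∧
      (∀ p ∈ Ak m k, G p ∈ Mset m ∧ ∀ i, p.1.2 i = 0 → (G p).2 i = 0) with hClaimdef
  have hmem_end0 : (0:ℝ) ∈ endS := by left; rfl
  have hmem_end1 : (1:ℝ) ∈ endS := by right; rfl
  -- base case
  have base : Claim m := by
    refine ⟨fun p => if p.2 = 0 then f' p.1 else if p.2 = 1 then g' p.1 else K' p, ?_, ?_, ?_⟩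
    · -- continuity
      have hsplit : Ak m m ⊆ ((Mset m) ×ˢ ({0} : Set ℝ)) ∪ ((Mset m) ×ˢ ({1} : Set ℝ))
          ∪ ((Tk m m) ×ˢ IccS) := by
        rintro ⟨q, s⟩ (⟨hq, hs⟩ | ⟨hq, hs⟩)
        · right; exact ⟨hq, hs⟩
        · rcases hs with h | h
          · left; left; exact ⟨hq, h⟩
          · left; right; exact ⟨hq, h⟩
      refine ContinuousOn.mono ?_ hsplit
      apply contOn_union_closed
      · exact ((isClosed_Mset.prod isClosed_singleton).union
          (isClosed_Mset.prod isClosed_singleton))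
      · exact (isClosed_Tk m).prod isClosed_IccS
      · apply contOn_union_closed (isClosed_Mset.prod isClosed_singleton)
          (isClosed_Mset.prod isClosed_singleton)
        · apply ContinuousOn.congr (f := fun p : EE m × ℝ => f' p.1)
          · exact hf'c.comp continuous_fst.continuousOn (fun p hp => hp.1)
          · rintro ⟨q, s⟩ ⟨hq, hs⟩
            have hs0 : s = 0 := hs
            simp [hs0]
        · apply ContinuousOn.congr (f := fun p : EE m × ℝ => g' p.1)
          · exact hg'c.comp continuous_fst.continuousOn (fun p hp => hp.1)
          · rintro ⟨q, s⟩ ⟨hq, hs⟩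
            have hs1 : s = 1 := hs
            simp [hs1]
      · apply ContinuousOn.congr (f := K') hK'c
        rintro ⟨q, s⟩ ⟨hq, hs⟩
        by_cases h0 : s = 0
        · subst h0; simp [hK0 q hq]
        · by_cases h1 : s = 1
          · subst h1; simp [hK1 q hq]
          · simp [h0, h1]
    · intro q hq
      constructor
      · simp
      · norm_num
    · rintro ⟨q, s⟩ hp
      have hqM : q ∈ Mset m := by
        rcases hp with ⟨hq, _⟩ | ⟨hq, _⟩
        · exact hq.1
        · exact hq
      by_cases h0 : s = 0
      · simp only [h0, if_pos rfl]
        exact ⟨(hf'm q hqM).1, fun i hi => (hf'm q hqM).2 i hi⟩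
      · by_cases h1 : s = 1
        · simp only [h1, if_neg one_ne_zero, if_pos rfl]
          exact ⟨(hg'm q hqM).1, fun i hi => (hg'm q hqM).2 i hi⟩
        · simp only [if_neg h0, if_neg h1]
          have hpt : (q, s) ∈ (Tk m m) ×ˢ IccS := by
            rcases hp with ⟨hq, hs⟩ | ⟨hq, hs⟩
            · exact ⟨hq, hs⟩
            · exfalso; rcases hs with h | h
              · exact h0 h
              · exact h1 h
          exact ⟨(hK'm _ hpt).1, fun i _ => (hK'm _ hpt).2 i⟩
  -- inductive step
  have step : ∀ k, k < m → Claim (k + 1) → Claim k := by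
    intro k hkm hCp
    obtain ⟨Gp, hGpc, hGpe, hGpm⟩ := hCp
    -- extension on each stratum of level k
    have hDOMsub : ∀ S : Finset (Fin m), S.card = k → DOM S ⊆ Ak m (k + 1) := by
      intro S hSk
      rintro ⟨q, s⟩ (⟨hq, hs⟩ | ⟨hq, hs⟩)
      · right; exact ⟨hq.1, hs⟩
      · left
        refine ⟨⟨hq.1.1, ?_⟩, hs⟩
        obtain ⟨hqs, i, hiS, hi0⟩ := hq
        have hins : insert i S ⊆ Zs q := by
          intro j hj
          rcases Finset.mem_insert.mp hj with rfl | hjS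
          · exact mem_Zs.mpr hi0
          · exact mem_Zs.mpr (hqs.2 j hjS)
        calc k + 1 = (insert i S).card := by rw [Finset.card_insert_of_notMem hiS, hSk]
        _ ≤ (Zs q).card := Finset.card_le_card hins
    have hext : ∀ S : Finset (Fin m), S.card = k →
        ∃ ψ : EE m × ℝ → EE m,
          ContinuousOn ψ ((strat S) ×ˢ IccS) ∧
          (∀ p ∈ DOM S, ψ p = Gp p) ∧
          (∀ p ∈ (strat S) ×ˢ IccS, ψ p ∈ strat S) := by
      intro S hSk
      have hRne : (Sᶜ : Finset (Fin m)).Nonempty := by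
        rw [← Finset.card_pos, Finset.card_compl, hSk, Fintype.card_fin]
        omega
      apply ext_step S hRne Gp (hGpc.mono (hDOMsub S hSk))
      intro p hp
      have h1 := hGpm p (hDOMsub S hSk hp)
      have hq : p.1 ∈ strat S := by
        rcases hp with ⟨hq, _⟩ | ⟨hq, _⟩
        · exact hq
        · exact hq.1
      exact ⟨h1.1, fun i hi => h1.2 i (hq.2 i hi)⟩
    choose ψf hψc hψe hψm using hext
    -- the glued map
    set G : EE m × ℝ → EE m := fun p =>
      if h : (Zs p.1).card = k ∧ p.2 ≠ 0 ∧ p.2 ≠ 1 then ψf (Zs p.1) h.1 p else Gp p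
      with hGdef
    -- agreement with Gp on the deeper part
    have hagree2 : ∀ p ∈ Ak m (k+1), G p = Gp p := by
      rintro ⟨q, s⟩ hp
      rcases hp with ⟨hq, hs⟩ | ⟨hq, hs⟩
      · have : ¬ ((Zs q).card = k ∧ s ≠ 0 ∧ s ≠ 1) := by
          rintro ⟨h1, -⟩
          have hq2 : k + 1 ≤ (Zs q).card := hq.2
          omega
        simp only [hGdef, dif_neg this]
      · have : ¬ ((Zs q).card = k ∧ s ≠ 0 ∧ s ≠ 1) := by
          rintro ⟨-, h2, h3⟩
          rcases hs with h | h
          · exact h2 h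
          · exact h3 h
        simp only [hGdef, dif_neg this]
    -- agreement with the stratum extensions
    have hagree : ∀ (S : Finset (Fin m)) (hSk : S.card = k),
        ∀ p ∈ (strat S) ×ˢ IccS, G p = ψf S hSk p := by
      rintro S hSk ⟨q, s⟩ ⟨hq, hs⟩
      have hq' : q ∈ strat S := hq
      have hSsub : S ⊆ Zs q := fun i hi => mem_Zs.mpr (hq'.2 i hi)
      by_cases h : (Zs q).card = k ∧ s ≠ 0 ∧ s ≠ 1
      · have hSeq : S = Zs q :=
          Finset.eq_of_subset_of_card_le hSsub (by omega)
        simp only [hGdef, dif_pos h]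
        congr 1
        · exact hSeq.symm
      · simp only [hGdef, dif_neg h]
        have hdom : ((q, s) : EE m × ℝ) ∈ DOM S := by
          by_cases hend : s = 0 ∨ s = 1
          · left
            refine ⟨hq, ?_⟩
            rcases hend with h' | h'
            · left; exact h'
            · right; exact h'
          · right
            push_neg at hend
            have hcard : k + 1 ≤ (Zs q).card := by
              have hk_le : k ≤ (Zs q).card := by
                rw [← hSk]
                exact Finset.card_le_card hSsub
              rcases lt_or_eq_of_le hk_le with h1 | h1
              · omega
              · exact absurd ⟨h1.symm, hend.1, hend.2⟩ h
            have hnsub : ¬ (Zs q ⊆ S) := by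
              intro hsub
              have := Finset.card_le_card hsub
              omega
            obtain ⟨i, hiZ, hiS⟩ := Finset.not_subset.mp hnsub
            exact ⟨⟨hq, i, hiS, mem_Zs.mp hiZ⟩, hs⟩
        exact (hψe S hSk (q, s) hdom).symm
    refine ⟨G, ?_, ?_, ?_⟩
    · -- continuity
      have hcover : Ak m k ⊆ (Ak m (k+1)) ∪
          ⋃ S ∈ Finset.univ.filter (fun S : Finset (Fin m) => S.card = k),
            (strat S) ×ˢ IccS := by
        rintro ⟨q, s⟩ hp
        rcases hp with ⟨hq, hs⟩ | ⟨hq, hs⟩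
        · obtain ⟨S, hSsub, hScard⟩ := Finset.exists_subset_card_eq hq.2
          right
          rw [Set.mem_iUnion₂]
          exact ⟨S, Finset.mem_filter.mpr ⟨Finset.mem_univ S, hScard⟩,
            ⟨⟨hq.1, fun i hi => mem_Zs.mp (hSsub hi)⟩, hs⟩⟩
        · left; right; exact ⟨hq, hs⟩
      refine ContinuousOn.mono ?_ hcover
      apply contOn_union_closed (isClosed_Ak (k+1))
      · exact Set.Finite.isClosed_biUnion (Finset.finite_toSet _)
          (fun S _ => (isClosed_strat S).prod isClosed_IccS)
      · exact (hGpc.mono (by intro p hp; exact hp)).congr hagree2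
      · apply contOn_biUnion_closed
        · intro S _; exact (isClosed_strat S).prod isClosed_IccS
        · intro S hS
          have hSk : S.card = k := (Finset.mem_filter.mp hS).2
          exact (hψc S hSk).congr (hagree S hSk)
    · -- endpoints
      intro q hq
      constructor
      · have h1 : ((q, (0:ℝ)) : EE m × ℝ) ∈ Ak m (k+1) := by
          right; exact ⟨hq, hmem_end0⟩
        rw [hagree2 _ h1]
        exact (hGpe q hq).1
      · have h1 : ((q, (1:ℝ)) : EE m × ℝ) ∈ Ak m (k+1) := by
          right; exact ⟨hq, hmem_end1⟩
        rw [hagree2 _ h1]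
        exact (hGpe q hq).2
    · -- membership and zero preservation
      rintro ⟨q, s⟩ hp
      by_cases h : (Zs q).card = k ∧ s ≠ 0 ∧ s ≠ 1
      · have hqM : q ∈ Mset m := by
          rcases hp with ⟨hq, _⟩ | ⟨hq, _⟩
          · exact hq.1
          · exact hq
        have hsI : s ∈ IccS := by
          rcases hp with ⟨_, hs⟩ | ⟨_, hs⟩
          · exact hs
          · exfalso
            rcases hs with h' | h'
            · exact h.2.1 h'
            · exact h.2.2 h'
        have hmem : ((q, s) : EE m × ℝ) ∈ (strat (Zs q)) ×ˢ IccS := by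
          refine ⟨⟨hqM, fun i hi => mem_Zs.mp hi⟩, hsI⟩
        have hv := hψm (Zs q) h.1 (q, s) hmem
        have hGeq : G (q, s) = ψf (Zs q) h.1 (q, s) := by
          simp only [hGdef, dif_pos h]
        rw [hGeq]
        exact ⟨hv.1, fun i hi => hv.2 i (mem_Zs.mpr hi)⟩
      · have hGeq : G (q, s) = Gp (q, s) := by
          simp only [hGdef, dif_neg h]
        rw [hGeq]
        have hp2 : ((q, s) : EE m × ℝ) ∈ Ak m (k+1) := by
          rcases hp with ⟨hq, hs⟩ | ⟨hq, hs⟩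
          · by_cases hend : s = 0 ∨ s = 1
            · right
              refine ⟨hq.1, ?_⟩
              rcases hend with h' | h'
              · left; exact h'
              · right; exact h'
            · push_neg at hend
              left
              refine ⟨⟨hq.1, ?_⟩, hs⟩
              have hnz : ¬ ((Zs q).card = k) := fun hc => h ⟨hc, hend.1, hend.2⟩
              have hq2 : k ≤ (Zs q).card := hq.2
              show k + 1 ≤ (Zs q).card
              omega
          · right; exact ⟨hq, hs⟩
        exact hGpm _ hp2
  -- downward induction
  have main : ∀ j, j ≤ m → Claim (m - j) := by
    intro j
    induction j with
    | zero => intro _; simpa using base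
    | succ n ih =>
      intro hj
      have h1 : Claim (m - n) := ih (by omega)
      have h2 : m - (n+1) + 1 = m - n := by omega
      have h3 : m - (n+1) < m := by omega
      apply step _ h3
      rw [h2]
      exact h1
  have fin := main m (le_refl m)
  rw [Nat.sub_self] at fin
  obtain ⟨G, hGc, hGe, hGm⟩ := fin
  have hsub : (Mset m) ×ˢ IccS ⊆ Ak m 0 := by
    rintro ⟨q, s⟩ ⟨hq, hs⟩
    left
    exact ⟨⟨hq, Nat.zero_le _⟩, hs⟩
  exact ⟨G, hGc.mono hsub, hGe, fun p hp => hGm p (hsub hp)⟩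

/-! ### The bridge: the one-point compactification model -/

section Bridge

noncomputable def aC (t : Fin (m+1) → ℝ) : ℝ := t ⟨0, Nat.succ_pos m⟩
noncomputable def gp (t : Fin (m+1) → ℝ) (w : Fin m) : ℝ := t w.succ - t w.castSucc
noncomputable def Gt (t : Fin (m+1) → ℝ) : ℝ := ∑ w, gp t w
noncomputable def den (t : Fin (m+1) → ℝ) : ℝ := (aC t)^2 + (Gt t + 1)^2
noncomputable def x0 (t : Fin (m+1) → ℝ) : ℂ :=
  ⟨2 * aC t / den t, 2 * (Gt t + 1) / den t - 1⟩
noncomputable def AA (t : Fin (m+1) → ℝ) : ℝ := Complex.abs (x0 t)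
noncomputable def yc (t : Fin (m+1) → ℝ) (w : Fin m) : ℝ :=
  4 * gp t w / (den t * (1 + AA t))

variable {t : Fin (m+1) → ℝ}

lemma gp_nonneg (hm : Monotone t) (w : Fin m) : 0 ≤ gp t w := by
  have := Fin.monotone_iff_le_succ.mp hm w
  simpa [gp] using this

lemma Gt_nonneg (hm : Monotone t) : 0 ≤ Gt t :=
  Finset.sum_nonneg (fun w _ => gp_nonneg hm w)

lemma den_ge_one (hm : Monotone t) : 1 ≤ den t := by
  have h1 := Gt_nonneg hm
  simp only [den]
  nlinarith [sq_nonneg (aC t), sq_nonneg (Gt t)]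

lemma den_pos (hm : Monotone t) : 0 < den t := lt_of_lt_of_le one_pos (den_ge_one hm)

lemma AA_nonneg : 0 ≤ AA t := Complex.abs.nonneg _

lemma one_add_AA_pos : (0:ℝ) < 1 + AA t := by linarith [AA_nonneg (t := t)]

private lemma sqAA_aux (a G D : ℝ) (hD : D = a^2 + (G+1)^2) (hpos : 0 < D) :
    2 * a / D * (2 * a / D) + (2 * (G + 1) / D - 1) * (2 * (G + 1) / D - 1)
      = (D - 4 * G) / D := by
  subst hD
  field_simp
  ring

lemma sqAA (hm : Monotone t) : (AA t)^2 = (den t - 4 * Gt t) / den t := by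
  have hd := den_pos hm
  rw [AA, Complex.sq_abs, Complex.normSq_apply]
  exact sqAA_aux (aC t) (Gt t) (den t) rfl hd

lemma den_sub_nonneg : 0 ≤ den t - 4 * Gt t := by
  have hden : den t = (aC t)^2 + (Gt t + 1)^2 := rfl
  nlinarith [sq_nonneg (Gt t - 1), sq_nonneg (aC t)]

lemma AA_le_one (hm : Monotone t) : AA t ≤ 1 := by
  have h1 := sqAA hm
  have h2 := den_pos hm
  have h3 := Gt_nonneg hm
  have h4 : (AA t)^2 ≤ 1 := by
    rw [h1, div_le_one h2]
    linarith
  nlinarith [AA_nonneg (t := t)]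

lemma one_sub_AA (hm : Monotone t) : (1 - AA t) * (1 + AA t) = 4 * Gt t / den t := by
  have h1 := sqAA hm
  have h2 := (den_pos hm).ne'
  have h3 : 1 - (AA t)^2 = 4 * Gt t / den t := by
    rw [h1]
    field_simp
    ring
  linear_combination h3

lemma sum_yc (hm : Monotone t) : ∑ w, yc t w = 1 - AA t := by
  have hd := den_pos hm
  have hA := one_add_AA_pos (t := t)
  have h2 : ∑ w, yc t w = 4 * Gt t / (den t * (1 + AA t)) := by
    simp only [yc]
    rw [← Finset.sum_div, ← Finset.mul_sum]
    rfl
  rw [h2, div_eq_iff (by positivity)]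
  have h3 : (1 - AA t) * (1 + AA t) * den t = 4 * Gt t := by
    rw [one_sub_AA hm]
    field_simp
  linear_combination (-1 : ℝ) * h3

lemma yc_nonneg (hm : Monotone t) (w : Fin m) : 0 ≤ yc t w := by
  have := gp_nonneg hm w
  have hd := den_pos hm
  have hA := one_add_AA_pos (t := t)
  apply div_nonneg (by linarith) (by positivity)

lemma AA_eq_one_iff (hm : Monotone t) : AA t = 1 ↔ Gt t = 0 := by
  have h1 := sqAA hm
  have h2 := den_pos hm
  have h3 := Gt_nonneg hm
  constructor
  · intro h
    rw [h] at h1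
    have : (1:ℝ) = (den t - 4 * Gt t)/den t := by simpa using h1
    rw [eq_div_iff h2.ne'] at this
    linarith
  · intro h
    have : (AA t)^2 = 1 := by
      rw [h1, h]
      field_simp
      ring
    nlinarith [AA_nonneg (t := t)]

lemma yc_eq_zero_iff (hm : Monotone t) (w : Fin m) : yc t w = 0 ↔ gp t w = 0 := by
  have hd := den_pos hm
  have hA := one_add_AA_pos (t := t)
  simp only [yc]
  rw [div_eq_zero_iff]
  constructor
  · rintro (h | h)
    · linarith
    · exfalso
      nlinarith
  · intro h
    left
    rw [h]; ring

/-! #### telescoping sums -/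

lemma sum_window (c : Fin m → ℝ) (n : ℕ) (hn : n < m) :
    (∑ w : Fin m, if (w:ℕ) < n+1 then c w else 0)
      = (∑ w : Fin m, if (w:ℕ) < n then c w else 0) + c ⟨n, hn⟩ := by
  have hsplit : ∀ w : Fin m, (if (w:ℕ) < n+1 then c w else 0)
      = (if (w:ℕ) < n then c w else 0) + (if w = ⟨n, hn⟩ then c w else 0) := by
    intro w
    by_cases h1 : (w:ℕ) < n
    · have h2 : (w:ℕ) < n + 1 := by omega
      have h3 : w ≠ ⟨n, hn⟩ := by
        intro h
        rw [h] at h1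
        simp at h1
      rw [if_pos h2, if_pos h1, if_neg h3, add_zero]
    · by_cases h4 : w = ⟨n, hn⟩
      · have h2 : (w:ℕ) < n + 1 := by rw [h4]; simp
        rw [if_pos h2, if_neg h1, if_pos h4, zero_add]
      · have h2 : ¬ ((w:ℕ) < n + 1) := by
          have h5 : (w:ℕ) ≠ n := fun hc => h4 (Fin.ext hc)
          omega
        rw [if_neg h2, if_neg h1, if_neg h4, add_zero]
  rw [Finset.sum_congr rfl (fun w _ => hsplit w), Finset.sum_add_distrib,
    Finset.sum_ite_eq' Finset.univ (⟨n, hn⟩ : Fin m) c]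
  simp

lemma partial_sum_eq (t : Fin (m+1) → ℝ) (j : Fin (m+1)) :
    t j = aC t + ∑ w : Fin m, (if (w:ℕ) < (j:ℕ) then gp t w else 0) := by
  obtain ⟨n, hn⟩ := j
  induction n with
  | zero =>
    simp only [Fin.val_mk, Nat.not_lt_zero, if_false, Finset.sum_const_zero, add_zero]
    rfl
  | succ k ih =>
    have hk : k < m + 1 := by omega
    have hkm : k < m := by omega
    have hih := ih hk
    simp only [Fin.val_mk] at hih ⊢
    rw [sum_window (fun w => gp t w) k hkm]
    have hgp : gp t ⟨k, hkm⟩ = t ⟨k+1, hn⟩ - t ⟨k, hk⟩ := rfl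
    rw [hgp]
    linarith [hih]

lemma Gt_eq (t : Fin (m+1) → ℝ) : Gt t = t (Fin.last m) - aC t := by
  have h1 := partial_sum_eq t (Fin.last m)
  have h2 : ∑ w : Fin m, (if (w:ℕ) < ((Fin.last m : Fin (m+1)):ℕ) then gp t w else 0)
      = Gt t := by
    apply Finset.sum_congr rfl
    intro w _
    rw [if_pos]
    exact w.2
  rw [h2] at h1
  linarith

/-! #### the compactification map -/

noncomputable def hmapD (q : DSet (m+1)) : EE m := (x0 q.1, fun w => yc q.1 w)

noncomputable def hmapF : OnePoint (DSet (m+1)) → EE m :=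
  fun x => Option.elim x ((⟨0, -1⟩ : ℂ), fun _ => 0) hmapD

lemma hmapF_infty : hmapF (m := m) ∞ = ((⟨0, -1⟩ : ℂ), fun _ => 0) := rfl

lemma hmapF_some (q : DSet (m+1)) : hmapF (OnePoint.some q) = hmapD q := rfl

lemma abs_negI : Complex.abs (⟨0, -1⟩ : ℂ) = 1 := by
  rw [Complex.abs_apply, Complex.normSq_mk]
  norm_num

lemma hmapF_mem (x : OnePoint (DSet (m+1))) : hmapF x ∈ Mset m := by
  cases x with
  | infty =>
    refine ⟨fun i => le_refl 0, ?_⟩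
    show Complex.abs (⟨0,-1⟩ : ℂ) + ∑ _i : Fin m, (0:ℝ) = 1
    rw [abs_negI, Finset.sum_const_zero]
    norm_num
  | coe q =>
    refine ⟨fun w => yc_nonneg q.2 w, ?_⟩
    show Complex.abs (x0 q.1) + ∑ w, yc q.1 w = 1
    rw [sum_yc q.2]
    show AA q.1 + (1 - AA q.1) = 1
    ring

/-! #### the inverse map -/

noncomputable def nsqp (x : ℂ) : ℝ := x.re^2 + (x.im + 1)^2
noncomputable def aInv (x : ℂ) : ℝ := 2 * x.re / nsqp x
noncomputable def bInv (x : ℂ) : ℝ := 2 * (x.im + 1) / nsqp x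
noncomputable def gInv (p : EE m) (w : Fin m) : ℝ :=
  p.2 w * (bInv p.1 - 1) / (∑ i, p.2 i)
noncomputable def tfun (p : EE m) : Fin (m+1) → ℝ :=
  fun j => aInv p.1 + ∑ w : Fin m, (if (w:ℕ) < (j:ℕ) then max (gInv p w) 0 else 0)

lemma tfun_mono (p : EE m) : Monotone (tfun p) := by
  intro j j' hjj
  simp only [tfun]
  apply add_le_add_right
  apply Finset.sum_le_sum
  intro w _
  by_cases h : (w:ℕ) < (j:ℕ)
  · rw [if_pos h, if_pos (lt_of_lt_of_le h hjj)]
  · rw [if_neg h]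
    by_cases h2 : (w:ℕ) < (j':ℕ)
    · rw [if_pos h2]; exact le_max_right _ _
    · rw [if_neg h2]

noncomputable def invmapF : EE m → OnePoint (DSet (m+1)) :=
  fun p => if p.1 = (⟨0, -1⟩ : ℂ) then ∞ else
    OnePoint.some (⟨tfun p, tfun_mono p⟩ : DSet (m+1))

lemma aC_tfun (p : EE m) : aC (tfun p) = aInv p.1 := by
  show tfun p ⟨0, Nat.succ_pos m⟩ = aInv p.1
  simp only [tfun, Fin.val_mk, Nat.not_lt_zero, if_false, Finset.sum_const_zero, add_zero]

lemma gp_tfun (p : EE m) (w : Fin m) : gp (tfun p) w = max (gInv p w) 0 := by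
  show tfun p w.succ - tfun p w.castSucc = _
  simp only [tfun, Fin.val_succ, Fin.coe_castSucc]
  rw [sum_window (fun w' => max (gInv p w') 0) (w:ℕ) w.2]
  have : (⟨(w:ℕ), w.2⟩ : Fin m) = w := Fin.eta w w.2
  rw [this]
  ring

/-! #### round trip 1 -/

private lemma inv_aux (u v N : ℝ) (hN : N = u^2 + v^2) (h0 : 0 < N) :
    (2*u/N)^2 + (2*v/N)^2 = 4/N := by
  subst hN
  field_simp
  ring

lemma nsqp_x0 (hm : Monotone t) : nsqp (x0 t) = 4 / den t := by
  have hd := den_pos hm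
  show (2 * aC t / den t)^2 + ((2 * (Gt t + 1) / den t - 1) + 1)^2 = 4 / den t
  have h1 : (2 * (Gt t + 1) / den t - 1) + 1 = 2 * (Gt t + 1)/den t := by ring
  rw [h1]
  exact inv_aux _ _ _ rfl hd

lemma aInv_x0 (hm : Monotone t) : aInv (x0 t) = aC t := by
  have hd := (den_pos hm).ne'
  rw [aInv, nsqp_x0 hm]
  show 2 * (2 * aC t / den t) / (4 / den t) = aC t
  field_simp
  ring

lemma bInv_x0 (hm : Monotone t) : bInv (x0 t) = Gt t + 1 := by
  have hd := (den_pos hm).ne'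
  rw [bInv, nsqp_x0 hm]
  show 2 * ((2 * (Gt t + 1) / den t - 1) + 1) / (4 / den t) = Gt t + 1
  have h1 : (2 * (Gt t + 1) / den t - 1) + 1 = 2 * (Gt t + 1)/den t := by ring
  rw [h1]
  field_simp
  ring

lemma one_sub_AA' (hm : Monotone t) :
    (1 - AA t) * (den t * (1 + AA t)) = 4 * Gt t := by
  have h1 := sqAA hm
  have hd := (den_pos hm).ne'
  have h2 : (1 - (AA t)^2) * den t = 4 * Gt t := by
    have h3 : (AA t)^2 * den t = den t - 4 * Gt t := by
      rw [h1]
      field_simp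
    linear_combination -h3
  linear_combination h2

lemma gInv_hmapD (q : DSet (m+1)) (w : Fin m) : gInv (hmapD q) w = gp q.1 w := by
  have hm := q.2
  have hd := den_pos hm
  have hA := one_add_AA_pos (t := q.1)
  show yc q.1 w * (bInv (x0 q.1) - 1) / (∑ i, yc q.1 i) = gp q.1 w
  rw [bInv_x0 hm, sum_yc hm]
  have hb : Gt q.1 + 1 - 1 = Gt q.1 := by ring
  rw [hb]
  by_cases hG : Gt q.1 = 0
  · have hgp : gp q.1 w = 0 := by
      have h1 : ∀ w' ∈ Finset.univ, 0 ≤ gp q.1 w' := fun w' _ => gp_nonneg hm w'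
      have := (Finset.sum_eq_zero_iff_of_nonneg h1).mp hG
      exact this w (Finset.mem_univ w)
    rw [hG, hgp]
    simp
  · have hGpos : 0 < Gt q.1 := lt_of_le_of_ne (Gt_nonneg hm) (Ne.symm hG)
    have hAlt : AA q.1 < 1 :=
      lt_of_le_of_ne (AA_le_one hm) (fun h => hG ((AA_eq_one_iff hm).mp h))
    have h1A : (0:ℝ) < 1 - AA q.1 := by linarith
    have h3 := one_sub_AA' hm
    calc yc q.1 w * Gt q.1 / (1 - AA q.1)
        = (4 * gp q.1 w) * Gt q.1 / ((1 - AA q.1) * (den q.1 * (1 + AA q.1))) := by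
          rw [yc, div_mul_eq_mul_div, div_div]
          rw [mul_comm (den q.1 * (1 + AA q.1)) (1 - AA q.1)]
    _ = (4 * gp q.1 w) * Gt q.1 / (4 * Gt q.1) := by rw [h3]
    _ = gp q.1 w := by
          have h4 : 4 * gp q.1 w * Gt q.1 = gp q.1 w * (4 * Gt q.1) := by ring
          rw [h4, mul_div_assoc, div_self (by positivity), mul_one]

lemma x0_ne_negI (hm : Monotone t) : x0 t ≠ (⟨0,-1⟩ : ℂ) := by
  intro h
  have him : (x0 t).im = -1 := by rw [h]
  have h1 : 2 * (Gt t + 1) / den t - 1 = -1 := him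
  have hd := den_pos hm
  have hG := Gt_nonneg hm
  have h2 : 2 * (Gt t + 1) / den t = 0 := by linarith
  rw [div_eq_zero_iff] at h2
  rcases h2 with h2 | h2 <;> linarith

lemma RT1 (x : OnePoint (DSet (m+1))) : invmapF (hmapF x) = x := by
  cases x with
  | infty =>
    rw [hmapF_infty]
    simp only [invmapF, if_pos rfl]
    simp
  | coe q =>
    have hm := q.2
    rw [hmapF_some]
    have hne : (hmapD q).1 ≠ (⟨0,-1⟩ : ℂ) := x0_ne_negI hm
    simp only [invmapF, if_neg hne]
    congr 1
    apply Subtype.ext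
    funext j
    show tfun (hmapD q) j = q.1 j
    rw [partial_sum_eq q.1 j]
    simp only [tfun]
    congr 1
    · exact aInv_x0 hm
    · apply Finset.sum_congr rfl
      intro w _
      congr 1
      rw [gInv_hmapD q w, max_eq_left (gp_nonneg hm w)]

/-! #### round trip 2 -/

lemma nsqp_pos {x : ℂ} (hx : x ≠ (⟨0,-1⟩ : ℂ)) : 0 < nsqp x := by
  have h0 : (0:ℝ) ≤ nsqp x := add_nonneg (sq_nonneg _) (sq_nonneg _)
  rcases lt_or_eq_of_le h0 with h | h
  · exact h
  · exfalso
    apply hx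
    have h1 : x.re^2 + (x.im + 1)^2 = 0 := h.symm
    have h2 : x.re = 0 := by nlinarith [sq_nonneg x.re, sq_nonneg (x.im + 1)]
    have h3 : x.im = -1 := by nlinarith [sq_nonneg x.re, sq_nonneg (x.im + 1)]
    exact Complex.ext h2 h3

lemma bInv_sub_one {x : ℂ} (hx : x ≠ (⟨0,-1⟩ : ℂ)) :
    bInv x - 1 = (1 - (Complex.abs x)^2) / nsqp x := by
  have hN := (nsqp_pos hx).ne'
  rw [bInv, Complex.sq_abs, Complex.normSq_apply]
  have hnsq : nsqp x = x.re^2 + (x.im + 1)^2 := rfl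
  field_simp
  linear_combination (-1:ℝ) * hnsq

lemma RT2 (p : EE m) (hp : p ∈ Mset m) : hmapF (invmapF p) = p := by
  by_cases hx : p.1 = (⟨0,-1⟩ : ℂ)
  · simp only [invmapF, if_pos hx]
    rw [hmapF_infty]
    have hsum : ∑ i, p.2 i = 0 := by
      have := hp.2
      rw [hx, abs_negI] at this
      linarith
    have hz : ∀ i, p.2 i = 0 := by
      intro i
      have h1 : ∀ i ∈ Finset.univ, (0:ℝ) ≤ p.2 i := fun i _ => hp.1 i
      exact (Finset.sum_eq_zero_iff_of_nonneg h1).mp hsum i (Finset.mem_univ i)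
    rw [Prod.ext_iff]
    constructor
    · exact hx.symm
    · funext i
      exact (hz i).symm
  · simp only [invmapF, if_neg hx]
    erw [hmapF_some]
    set x := p.1 with hxdef
    have hN := nsqp_pos hx
    have habs : Complex.abs x ≤ 1 := Mset_abs_le_one hp
    have hσ : ∑ i, p.2 i = 1 - Complex.abs x := by linarith [hp.2]
    have hG' : bInv x - 1 = (1 - (Complex.abs x)^2) / nsqp x := bInv_sub_one hx
    have hG'nn : 0 ≤ bInv x - 1 := by
      rw [hG']
      apply div_nonneg _ hN.le
      nlinarith [Complex.abs.nonneg x]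
    have hginn : ∀ w, 0 ≤ gInv p w := by
      intro w
      apply div_nonneg (mul_nonneg (hp.1 w) hG'nn)
      rw [hσ]
      linarith
    have ht_gp : ∀ w, gp (tfun p) w = gInv p w := by
      intro w
      rw [gp_tfun, max_eq_left (hginn w)]
    have hzero_away : (∑ i, p.2 i) = 0 → ∀ i, p.2 i = 0 := by
      intro h0 i
      have h1 : ∀ i ∈ Finset.univ, (0:ℝ) ≤ p.2 i := fun i _ => hp.1 i
      exact (Finset.sum_eq_zero_iff_of_nonneg h1).mp h0 i (Finset.mem_univ i)
    have ht_G : Gt (tfun p) = bInv x - 1 := by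
      show ∑ w, gp (tfun p) w = _
      rw [Finset.sum_congr rfl (fun w _ => ht_gp w)]
      by_cases hσ0 : ∑ i, p.2 i = 0
      · have habs1 : Complex.abs x = 1 := by rw [hσ0] at hσ; linarith
        have hb0 : bInv x - 1 = 0 := by
          rw [hG', habs1]
          norm_num
        rw [hb0]
        apply Finset.sum_eq_zero
        intro w _
        show p.2 w * (bInv x - 1) / (∑ i, p.2 i) = 0
        rw [hzero_away hσ0 w]
        simp
      · have h5 : ∑ w, gInv p w = (∑ w, p.2 w) * (bInv x - 1) / (∑ i, p.2 i) := by
          rw [Finset.sum_mul, Finset.sum_div]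
          rfl
        rw [h5, mul_comm, mul_div_assoc, div_self hσ0, mul_one]
    have ht_a : aC (tfun p) = aInv x := aC_tfun p
    have hden_t : den (tfun p) = 4 / nsqp x := by
      show (aC (tfun p))^2 + (Gt (tfun p) + 1)^2 = 4 / nsqp x
      rw [ht_a, ht_G]
      have h1 : bInv x - 1 + 1 = bInv x := by ring
      rw [h1, aInv, bInv]
      exact inv_aux _ _ _ rfl hN
    have hx0_t : x0 (tfun p) = x := by
      apply Complex.ext
      · show 2 * aC (tfun p) / den (tfun p) = x.re
        rw [ht_a, hden_t, aInv]
        field_simp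
        ring
      · show 2 * (Gt (tfun p) + 1) / den (tfun p) - 1 = x.im
        rw [ht_G, hden_t]
        have h1 : bInv x - 1 + 1 = bInv x := by ring
        rw [h1, bInv]
        field_simp
        ring
    have hAA_t : AA (tfun p) = Complex.abs x := by rw [AA, hx0_t]
    have hyc : ∀ w, yc (tfun p) w = p.2 w := by
      intro w
      show 4 * gp (tfun p) w / (den (tfun p) * (1 + AA (tfun p))) = p.2 w
      rw [ht_gp w, hden_t, hAA_t]
      by_cases hσ0 : ∑ i, p.2 i = 0
      · have hz := hzero_away hσ0
        have hg0 : gInv p w = 0 := by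
          show p.2 w * (bInv x - 1) / (∑ i, p.2 i) = 0
          rw [hz w]
          simp
        rw [hg0, hz w]
        simp
      · have hAlt : Complex.abs x < 1 := by
          rcases lt_or_eq_of_le habs with h | h
          · exact h
          · exfalso; apply hσ0; rw [hσ, h]; ring
        show 4 * (p.2 w * (bInv x - 1) / (∑ i, p.2 i)) / (4 / nsqp x * (1 + Complex.abs x))
            = p.2 w
        rw [hG', hσ]
        have h1A : (0:ℝ) < 1 - Complex.abs x := by linarith
        have h2A : (0:ℝ) < 1 + Complex.abs x := by linarith [Complex.abs.nonneg x]
        set A := Complex.abs x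
        field_simp
        ring
    show (x0 (tfun p), fun w => yc (tfun p) w) = p
    rw [Prod.ext_iff]
    refine ⟨hx0_t, ?_⟩
    funext w
    exact hyc w

/-! #### continuity of the compactification map -/

lemma cont_mk {α : Type*} [TopologicalSpace α] {f g : α → ℝ}
    (hf : Continuous f) (hg : Continuous g) :
    Continuous fun a => (⟨f a, g a⟩ : ℂ) := by
  simp only [Complex.mk_eq_add_mul_I]
  exact (Complex.continuous_ofReal.comp hf).add
    ((Complex.continuous_ofReal.comp hg).mul continuous_const)

lemma isClosed_monoSet : IsClosed {t : Fin (m+1) → ℝ | Monotone t} := by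
  have heq : {t : Fin (m+1) → ℝ | Monotone t}
      = ⋂ (i : Fin (m+1)), ⋂ (j : Fin (m+1)), ⋂ (_ : i ≤ j), {t | t i ≤ t j} := by
    ext t
    simp only [Set.mem_iInter, Set.mem_setOf_eq]
    exact ⟨fun h i j hij => h hij, fun h a b hab => h a b hab⟩
  rw [heq]
  exact isClosed_iInter (fun i => isClosed_iInter (fun j => isClosed_iInter (fun _ =>
    isClosed_le (continuous_apply i) (continuous_apply j))))

lemma cont_val : Continuous (fun q : DSet (m+1) => (q.1 : Fin (m+1) → ℝ)) :=
  continuous_subtype_val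

lemma cont_aC : Continuous (fun q : DSet (m+1) => aC q.1) :=
  (continuous_apply _).comp cont_val

lemma cont_gp (w : Fin m) : Continuous (fun q : DSet (m+1) => gp q.1 w) :=
  (((continuous_apply _).comp cont_val).sub ((continuous_apply _).comp cont_val))

lemma cont_Gt : Continuous (fun q : DSet (m+1) => Gt q.1) :=
  continuous_finset_sum _ (fun w _ => cont_gp w)

lemma cont_den : Continuous (fun q : DSet (m+1) => den q.1) := by
  have h1 : Continuous fun q : DSet (m+1) => (aC q.1)^2 := cont_aC.pow 2
  have h2 : Continuous fun q : DSet (m+1) => (Gt q.1 + 1)^2 := (cont_Gt.add continuous_const).pow 2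
  exact h1.add h2

lemma den_ne (q : DSet (m+1)) : den q.1 ≠ 0 := (den_pos q.2).ne'

lemma cont_x0 : Continuous (fun q : DSet (m+1) => x0 q.1) := by
  apply cont_mk
  · exact ((continuous_const.mul cont_aC).div cont_den den_ne)
  · exact ((continuous_const.mul (cont_Gt.add continuous_const)).div cont_den den_ne).sub
      continuous_const

lemma cont_AA : Continuous (fun q : DSet (m+1) => AA q.1) :=
  Complex.continuous_abs.comp cont_x0

lemma cont_yc (w : Fin m) : Continuous (fun q : DSet (m+1) => yc q.1 w) := by
  apply (continuous_const.mul (cont_gp w)).div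
    (cont_den.mul (continuous_const.add cont_AA))
  intro q
  have h1 := den_pos q.2
  have h2 := one_add_AA_pos (t := q.1)
  exact (mul_pos h1 h2).ne'

lemma cont_hmapD : Continuous (hmapD (m := m)) := by
  apply Continuous.prodMk cont_x0
  exact continuous_pi cont_yc

lemma dist_x0_negI (hm : Monotone t) :
    dist (x0 t) ((⟨0,-1⟩ : ℂ)) = Real.sqrt (4 / den t) := by
  rw [Complex.dist_eq, Complex.norm_def, ← nsqp_x0 hm]
  congr 1
  simp only [Complex.normSq_apply, nsqp, Complex.sub_re, Complex.sub_im]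
  ring

lemma dist_hmapD_le (q : DSet (m+1)) :
    dist (hmapD q) (((⟨0,-1⟩ : ℂ), fun _ => 0) : EE m) ≤ Real.sqrt (4 / den q.1) := by
  have hm := q.2
  rw [Prod.dist_eq]
  apply max_le
  · show dist (x0 q.1) ((⟨0,-1⟩ : ℂ)) ≤ _
    rw [dist_x0_negI hm]
  · have h1 : (0:ℝ) ≤ 1 - AA q.1 := by linarith [AA_le_one hm]
    have h2 : dist (fun w => yc q.1 w) (fun _ => (0:ℝ)) ≤ 1 - AA q.1 := by
      rw [dist_pi_le_iff h1]
      intro w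
      rw [Real.dist_eq, sub_zero, _root_.abs_of_nonneg (yc_nonneg hm w)]
      calc yc q.1 w ≤ ∑ w', yc q.1 w' :=
        Finset.single_le_sum (fun w' _ => yc_nonneg hm w') (Finset.mem_univ w)
      _ = 1 - AA q.1 := sum_yc hm
    have h3 : 1 - AA q.1 ≤ dist (x0 q.1) ((⟨0,-1⟩ : ℂ)) := by
      have h4 := abs_norm_sub_norm_le (x0 q.1) ((⟨0,-1⟩ : ℂ))
      have h5 : ‖(⟨0,-1⟩ : ℂ)‖ = 1 := by
        show Complex.abs _ = 1
        exact abs_negI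
      have h6 : ‖x0 q.1‖ = AA q.1 := rfl
      rw [Complex.dist_eq]
      rw [h5, h6] at h4
      have h7 := abs_le.mp h4
      show 1 - AA q.1 ≤ Complex.abs (x0 q.1 - ⟨0,-1⟩)
      have h8 : ‖x0 q.1 - (⟨0,-1⟩:ℂ)‖ = Complex.abs (x0 q.1 - ⟨0,-1⟩) := rfl
      linarith [h7.1]
    calc dist (fun w => yc q.1 w) (fun _ => (0:ℝ)) ≤ 1 - AA q.1 := h2
    _ ≤ dist (x0 q.1) ((⟨0,-1⟩ : ℂ)) := h3
    _ = Real.sqrt (4 / den q.1) := dist_x0_negI hm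

lemma tendsto_den_atTop :
    Tendsto (fun q : DSet (m+1) => den q.1) (cocompact (DSet (m+1))) atTop := by
  have hce : Topology.IsClosedEmbedding (fun q : DSet (m+1) => (q.1 : Fin (m+1) → ℝ)) :=
    (isClosed_monoSet (m := m)).isClosedEmbedding_subtypeVal
  have h1 : Tendsto (fun q : DSet (m+1) => ‖q.1‖) (cocompact (DSet (m+1))) atTop :=
    tendsto_norm_cocompact_atTop.comp hce.tendsto_cocompact
  have h2 : Tendsto (fun x : ℝ => x^2/2) atTop atTop :=
    (tendsto_pow_atTop two_ne_zero).atTop_div_const two_pos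
  apply tendsto_atTop_mono _ (h2.comp h1)
  intro q
  show ‖q.1‖^2/2 ≤ den q.1
  have hm := q.2
  have hb : ‖q.1‖ ≤ |aC q.1| + Gt q.1 := by
    have hnn : (0:ℝ) ≤ |aC q.1| + Gt q.1 := by
      have := Gt_nonneg hm
      positivity
    rw [pi_norm_le_iff_of_nonneg hnn]
    intro j
    rw [Real.norm_eq_abs, abs_le]
    have hGt := Gt_eq q.1
    have hj1 : aC q.1 ≤ q.1 j := hm (by
      show (⟨0, Nat.succ_pos m⟩ : Fin (m+1)) ≤ j
      simp [Fin.le_def])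
    have hj2 : q.1 j ≤ q.1 (Fin.last m) := hm (by
      show j ≤ Fin.last m
      simp [Fin.le_def]
      omega)
    constructor
    · have : -(|aC q.1| + Gt q.1) ≤ aC q.1 := by
        have := abs_nonneg (aC q.1)
        have := Gt_nonneg hm
        have := neg_abs_le (aC q.1)
        linarith
      linarith
    · have : q.1 (Fin.last m) = aC q.1 + Gt q.1 := by linarith [hGt]
      have h5 := le_abs_self (aC q.1)
      linarith
  have hnorm : (0:ℝ) ≤ ‖q.1‖ := norm_nonneg _
  have hGt0 := Gt_nonneg hm
  show ‖q.1‖^2/2 ≤ (aC q.1)^2 + (Gt q.1 + 1)^2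
  nlinarith [pow_le_pow_left₀ hnorm hb 2, sq_nonneg (|aC q.1| - Gt q.1),
    _root_.sq_abs (aC q.1), abs_nonneg (aC q.1)]

lemma tendsto_hmapD :
    Tendsto (hmapD (m := m)) (cocompact (DSet (m+1)))
      (𝓝 (((⟨0,-1⟩ : ℂ), fun _ => 0) : EE m)) := by
  rw [tendsto_iff_dist_tendsto_zero]
  apply squeeze_zero' (Filter.Eventually.of_forall fun _ => dist_nonneg)
    (Filter.Eventually.of_forall fun q => dist_hmapD_le q)
  have h1 : Tendsto (fun q : DSet (m+1) => 4 / den q.1) (cocompact (DSet (m+1))) (𝓝 0) :=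
    Filter.Tendsto.div_atTop tendsto_const_nhds tendsto_den_atTop
  have h2 : Tendsto Real.sqrt (𝓝 0) (𝓝 0) := by
    have := Real.continuous_sqrt.tendsto 0
    rwa [Real.sqrt_zero] at this
  exact h2.comp h1

lemma cont_hmapF : Continuous (hmapF (m := m)) := by
  rw [OnePoint.continuous_iff]
  constructor
  · rw [coclosedCompact_eq_cocompact]
    exact tendsto_hmapD
  · exact cont_hmapD

/-! #### the homeomorphism -/

noncomputable def eqvM : OnePoint (DSet (m+1)) ≃ {p : EE m // p ∈ Mset m} where
  toFun x := ⟨hmapF x, hmapF_mem x⟩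
  invFun p := invmapF p.1
  left_inv := RT1
  right_inv p := Subtype.ext (RT2 p.1 p.2)

noncomputable def homeoM : OnePoint (DSet (m+1)) ≃ₜ {p : EE m // p ∈ Mset m} :=
  Continuous.homeoOfEquivCompactToT2 (f := eqvM) (cont_hmapF.subtype_mk _)

lemma contOn_invmapF : ContinuousOn (invmapF (m := m)) (Mset m) := by
  rw [continuousOn_iff_continuous_restrict]
  have heq : (Mset m).domRestrict (invmapF (m := m)) = (homeoM (m := m)).symm := by
    funext p
    rfl
  rw [heq]
  exact (homeoM (m := m)).symm.continuous

/-! #### strata correspondence -/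

lemma hmapF_zero_iff (x : OnePoint (DSet (m+1))) (w : Fin m) :
    (hmapF x).2 w = 0 ↔ x ∈ faceSet (m+1) w.castSucc w.succ := by
  cases x with
  | infty =>
    simp only [hmapF_infty]
    constructor
    · intro _; left; rfl
    · intro _; trivial
  | coe q =>
    rw [hmapF_some]
    show yc q.1 w = 0 ↔ _
    rw [yc_eq_zero_iff q.2 w]
    constructor
    · intro h
      right
      refine ⟨q, ?_, rfl⟩
      have : q.1 w.succ - q.1 w.castSucc = 0 := h
      linarith
    · rintro (h | ⟨q', hq', hqq⟩)
      · exact absurd h (by simp [OnePoint.coe_ne_infty])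
      · have : q = q' := OnePoint.coe_eq_coe.mp hqq
        subst this
        show q.1 w.succ - q.1 w.castSucc = 0
        linarith [hq']

lemma diag_iff (x : OnePoint (DSet (m+1))) :
    x ∈ diagCircle (m+1) ↔ ∀ w : Fin m, (hmapF x).2 w = 0 := by
  cases x with
  | infty =>
    constructor
    · intro _ w; rfl
    · intro _; left; rfl
  | coe q =>
    constructor
    · rintro (h | ⟨q', hq', hqq⟩) w
      · exact absurd h (by simp [OnePoint.coe_ne_infty])
      · have : q = q' := OnePoint.coe_eq_coe.mp hqq
        subst this
        rw [hmapF_some]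
        show yc q.1 w = 0
        rw [yc_eq_zero_iff q.2 w]
        show q.1 w.succ - q.1 w.castSucc = 0
        rw [hq' w.succ w.castSucc]
        ring
    · intro h
      right
      refine ⟨q, ?_, rfl⟩
      have hgp : ∀ w : Fin m, gp q.1 w = 0 := by
        intro w
        have := h w
        rw [hmapF_some] at this
        exact (yc_eq_zero_iff q.2 w).mp this
      have hconst : ∀ j : Fin (m+1), q.1 j = aC q.1 := by
        intro j
        rw [partial_sum_eq q.1 j]
        have : ∀ w : Fin m, (if (w:ℕ) < (j:ℕ) then gp q.1 w else 0) = 0 := by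
          intro w
          rw [hgp w]
          simp
        rw [Finset.sum_congr rfl (fun w _ => this w), Finset.sum_const_zero, add_zero]
      intro i j
      rw [hconst i, hconst j]

end Bridge

end Miller18

open Miller18

/-- Let `d ≥ 1` and let `f, g` be continuous facial self-maps of the
one-point compactification `D(d)` of `D'(d)`.  Then `f` and `g` are homotopic through
facial maps if and only if their restrictions to the circle `B̄_∅ = {(t,…,t)} ∪ {∞}`
(which facial maps carry into itself) are homotopic as maps `B̄_∅ → B̄_∅`. -/
theorem miller_stmt18 (d : ℕ) (hd : 1 ≤ d)
    (f g : OnePoint (DSet d) → OnePoint (DSet d))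
    (hf : Continuous f) (hg : Continuous g)
    (hff : FacialMap d f) (hgf : FacialMap d g) :
    (∃ H : Set.Icc (0 : ℝ) 1 × OnePoint (DSet d) → OnePoint (DSet d),
        Continuous H ∧
        (∀ x, H (⟨0, by norm_num⟩, x) = f x) ∧
        (∀ x, H (⟨1, by norm_num⟩, x) = g x) ∧
        ∀ s : Set.Icc (0 : ℝ) 1, FacialMap d fun x => H (s, x)) ↔
    (∃ K : Set.Icc (0 : ℝ) 1 × ↥(diagCircle d) → OnePoint (DSet d),
        Continuous K ∧
        (∀ x : ↥(diagCircle d), K (⟨0, by norm_num⟩, x) = f x.1) ∧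
        (∀ x : ↥(diagCircle d), K (⟨1, by norm_num⟩, x) = g x.1) ∧
        ∀ p, K p ∈ diagCircle d) := by
  obtain ⟨m, rfl⟩ : ∃ m, d = m + 1 := ⟨d - 1, by omega⟩
  have hwall : ∀ (i j : Fin (m+1)), (i : ℕ) + 1 = (j : ℕ) →
      ∃ w : Fin m, i = w.castSucc ∧ j = w.succ := by
    intro i j hij
    have hiv : (i : ℕ) < m := by
      have := j.2
      omega
    refine ⟨⟨(i:ℕ), hiv⟩, ?_, ?_⟩
    · apply Fin.ext
      rfl
    · apply Fin.ext
      show (j : ℕ) = (i:ℕ) + 1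
      omega
  constructor
  · -- forward direction
    rintro ⟨H, hHc, hH0, hH1, hHf⟩
    refine ⟨fun p => H (p.1, p.2.1), ?_, ?_, ?_, ?_⟩
    · exact hHc.comp (continuous_fst.prodMk (continuous_subtype_val.comp continuous_snd))
    · intro x; exact hH0 x.1
    · intro x; exact hH1 x.1
    · rintro ⟨s, x⟩
      rw [diag_iff]
      intro w
      have hz : (hmapF x.1).2 w = 0 := (diag_iff x.1).mp x.2 w
      have hface : x.1 ∈ faceSet (m+1) w.castSucc w.succ := (hmapF_zero_iff x.1 w).mp hz
      have h2 := hHf s w.castSucc w.succ rfl x.1 hface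
      exact (hmapF_zero_iff _ w).mpr h2
  · -- backward direction
    rintro ⟨K, hKc, hK0, hK1, hKm⟩
    classical
    -- transported endpoint maps
    set f' : EE m → EE m := fun p => hmapF (f (invmapF p)) with hf'def
    set g' : EE m → EE m := fun p => hmapF (g (invmapF p)) with hg'def
    -- lift of K
    set cK : EE m × ℝ → OnePoint (DSet (m+1)) := fun ps =>
      if h : invmapF ps.1 ∈ diagCircle (m+1) then
        K (Set.projIcc 0 1 zero_le_one ps.2, ⟨invmapF ps.1, h⟩) else ∞ with hcKdef
    set K' : EE m × ℝ → EE m := fun ps => hmapF (cK ps) with hK'def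
    -- basic facts about Tk m m
    have hTkz : ∀ p ∈ Tk m m, ∀ w : Fin m, p.2 w = 0 := by
      intro p hp w
      have hcard : (Zs p).card = m := le_antisymm (by
        have := Finset.card_le_univ (Zs p)
        simpa using this) hp.2
      have huniv : Zs p = Finset.univ := Finset.eq_univ_of_card _ (by simpa using hcard)
      have : w ∈ Zs p := by rw [huniv]; exact Finset.mem_univ w
      exact mem_Zs.mp this
    have hTkdiag : ∀ p ∈ Tk m m, invmapF p ∈ diagCircle (m+1) := by
      intro p hp
      rw [diag_iff]
      intro w
      rw [RT2 p hp.1]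
      exact hTkz p hp w
    have hcKval : ∀ (ps : EE m × ℝ) (h : invmapF ps.1 ∈ diagCircle (m+1)),
        cK ps = K (Set.projIcc 0 1 zero_le_one ps.2, ⟨invmapF ps.1, h⟩) := by
      intro ps h
      simp only [hcKdef, dif_pos h]
    -- continuity hypotheses
    have hf'c : ContinuousOn f' (Mset m) :=
      (cont_hmapF.comp hf).comp_continuousOn contOn_invmapF
    have hg'c : ContinuousOn g' (Mset m) :=
      (cont_hmapF.comp hg).comp_continuousOn contOn_invmapF
    have hfacial_zero : ∀ (F : OnePoint (DSet (m+1)) → OnePoint (DSet (m+1))),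
        FacialMap (m+1) F → ∀ p ∈ Mset m, ∀ w : Fin m, p.2 w = 0 →
          (hmapF (F (invmapF p))).2 w = 0 := by
      intro F hF p hp w h0
      have h1 : (hmapF (invmapF p)).2 w = 0 := by rw [RT2 p hp]; exact h0
      have h2 : invmapF p ∈ faceSet (m+1) w.castSucc w.succ := (hmapF_zero_iff _ w).mp h1
      have h3 := hF w.castSucc w.succ rfl (invmapF p) h2
      exact (hmapF_zero_iff _ w).mpr h3
    have hf'm : ∀ p ∈ Mset m, f' p ∈ Mset m ∧ ∀ w, p.2 w = 0 → (f' p).2 w = 0 :=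
      fun p hp => ⟨hmapF_mem _, fun w h0 => hfacial_zero f hff p hp w h0⟩
    have hg'm : ∀ p ∈ Mset m, g' p ∈ Mset m ∧ ∀ w, p.2 w = 0 → (g' p).2 w = 0 :=
      fun p hp => ⟨hmapF_mem _, fun w h0 => hfacial_zero g hgf p hp w h0⟩
    have hcKc : ContinuousOn cK ((Tk m m) ×ˢ IccS) := by
      rw [continuousOn_iff_continuous_restrict]
      have heq : ((Tk m m) ×ˢ IccS).domRestrict cK
          = fun ps : ↥((Tk m m) ×ˢ IccS) =>
              K (Set.projIcc 0 1 zero_le_one ps.1.2,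
                ⟨invmapF ps.1.1, hTkdiag ps.1.1 ps.2.1⟩) := by
        funext ps
        exact hcKval ps.1 (hTkdiag ps.1.1 ps.2.1)
      rw [heq]
      apply hKc.comp
      apply Continuous.prodMk
      · exact continuous_projIcc.comp (continuous_snd.comp continuous_subtype_val)
      · refine Continuous.subtype_mk ?_ _
        exact contOn_invmapF.comp_continuous
          (continuous_fst.comp continuous_subtype_val)
          (fun ps => ps.2.1.1)
    have hK'c : ContinuousOn K' ((Tk m m) ×ˢ IccS) :=
      cont_hmapF.comp_continuousOn hcKc
    have hK'm : ∀ ps ∈ (Tk m m) ×ˢ IccS, K' ps ∈ Mset m ∧ ∀ w, (K' ps).2 w = 0 := by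
      rintro ⟨p, s⟩ ⟨hp, hs⟩
      refine ⟨hmapF_mem _, fun w => ?_⟩
      show (hmapF (cK (p, s))).2 w = 0
      rw [hcKval (p, s) (hTkdiag p hp)]
      exact (diag_iff _).mp (hKm _) w
    have hproj0 : Set.projIcc (0:ℝ) 1 zero_le_one 0 = ⟨0, by norm_num⟩ := by
      apply Subtype.ext
      simp
    have hproj1 : Set.projIcc (0:ℝ) 1 zero_le_one 1 = ⟨1, by norm_num⟩ := by
      apply Subtype.ext
      simp
    have hK'0 : ∀ q ∈ Tk m m, K' (q, 0) = f' q := by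
      intro q hq
      show hmapF (cK (q, 0)) = f' q
      rw [hcKval (q, 0) (hTkdiag q hq), hproj0, hK0]
    have hK'1 : ∀ q ∈ Tk m m, K' (q, 1) = g' q := by
      intro q hq
      show hmapF (cK (q, 1)) = g' q
      rw [hcKval (q, 1) (hTkdiag q hq), hproj1, hK1]
    -- glue
    obtain ⟨G, hGc, hGe, hGm⟩ := glue f' g' K' hf'c hg'c hf'm hg'm hK'c hK'm hK'0 hK'1
    -- assemble the homotopy
    refine ⟨fun sx => invmapF (G (hmapF sx.2, sx.1.1)), ?_, ?_, ?_, ?_⟩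
    · -- continuity
      have h1 : ContinuousOn (fun pr : EE m × ℝ => invmapF (G pr)) ((Mset m) ×ˢ IccS) :=
        contOn_invmapF.comp hGc (fun pr hpr => (hGm pr hpr).1)
      apply h1.comp_continuous
      · exact (cont_hmapF.comp continuous_snd).prodMk
          (continuous_subtype_val.comp continuous_fst)
      · intro sx
        exact ⟨hmapF_mem _, sx.1.2⟩
    · -- endpoint 0
      intro x
      show invmapF (G (hmapF x, 0)) = f x
      rw [(hGe (hmapF x) (hmapF_mem x)).1]
      show invmapF (hmapF (f (invmapF (hmapF x)))) = f x
      rw [RT1, RT1]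
    · -- endpoint 1
      intro x
      show invmapF (G (hmapF x, 1)) = g x
      rw [(hGe (hmapF x) (hmapF_mem x)).2]
      show invmapF (hmapF (g (invmapF (hmapF x)))) = g x
      rw [RT1, RT1]
    · -- facial slices
      intro s i j hij x hx
      obtain ⟨w, rfl, rfl⟩ := hwall i j hij
      have hz : (hmapF x).2 w = 0 := (hmapF_zero_iff x w).mpr hx
      have hmem : (hmapF x, s.1) ∈ (Mset m) ×ˢ IccS := ⟨hmapF_mem x, s.2⟩
      have h2 := (hGm (hmapF x, s.1) hmem).2 w hz
      have h3 : (hmapF (invmapF (G (hmapF x, s.1)))).2 w = 0 := by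
        rw [RT2 _ (hGm (hmapF x, s.1) hmem).1]
        exact h2
      exact (hmapF_zero_iff _ w).mp h3
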